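/- Let e, r : ℝ → ℝ be differentiable, β > 0, z₂(t) = (e(t), r(t)) ∈ ℝ², and let J be a constant with c_j ≤ J ≤ c_J (0 < c_j ≤ c_J). Suppose B : ℝ → ℝ satisfies B̲ₙ ≤ B(t) ≤ B̄ₙ with B̲ₙ > 0, χ : ℝ → ℝ satisfies |χ(t)| ≤ c₁ + c₂‖z₂(t)‖ with c₁, c₂ ≥ 0, and the closed-loop equations e'(t) = r(t) − β e(t) and J r'(t) = χ(t) − e(t) − B(t)(k₂ r(t) + (k₃ + k₄‖z₂(t)‖) sign(r(t))) hold, where sign denotes the real sign function (sign(0) = 0) and the gains satisfy k₂ > 0, k₃ ≥ c₁/B̲ₙ, k₄ ≥ c₂/B̲ₙ. Then for all t, e(t)e'(t) + J r(t) r'(t) ≤ −β e(t)² − B̲ₙ k₂ r(t)². -/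
import Mathlib


/-- The stacked vector `z₂ = (e, r) ∈ ℝ²` with `‖z₂‖² = e² + r²`. -/
noncomputable def stack2 (x y : ℝ) : WithLp 2 (ℝ × ℝ) :=
  (WithLp.equiv 2 _).symm (x, y)

/-- key Lyapunov-derivative bound for the motor-layer closed loop:
`e e' + J r r' ≤ −β e² − B̲ₙ k₂ r²`. -/
theorem stmt10
    (e r ed rd : ℝ → ℝ)
    (he : ∀ t, HasDerivAt e (ed t) t) (hr : ∀ t, HasDerivAt r (rd t) t)
    (β : ℝ) (hβ : 0 < β)
    (z₂ : ℝ → WithLp 2 (ℝ × ℝ)) (hz₂ : z₂ = fun t => stack2 (e t) (r t))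
    (J c_j c_J : ℝ) (hc_j : 0 < c_j) (hc_jJ : c_j ≤ c_J)
    (hJlow : c_j ≤ J) (hJhigh : J ≤ c_J)
    (B : ℝ → ℝ) (Blo Bhi : ℝ) (hBlo : 0 < Blo)
    (hB : ∀ t, Blo ≤ B t ∧ B t ≤ Bhi)
    (χ : ℝ → ℝ) (c₁ c₂ : ℝ) (hc₁ : 0 ≤ c₁) (hc₂ : 0 ≤ c₂)
    (hχ : ∀ t, |χ t| ≤ c₁ + c₂ * ‖z₂ t‖)
    (k₂ k₃ k₄ : ℝ) (hk₂ : 0 < k₂) (hk₃ : c₁ / Blo ≤ k₃) (hk₄ : c₂ / Blo ≤ k₄)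
    (hloop₁ : ∀ t, ed t = r t - β * e t)
    (hloop₂ : ∀ t, J * rd t
      = χ t - e t - B t * (k₂ * r t + (k₃ + k₄ * ‖z₂ t‖) * Real.sign (r t))) :
    ∀ t, e t * ed t + J * r t * rd t ≤ -β * e t ^ 2 - Blo * k₂ * r t ^ 2 := by
  intro t
  have h1 := hloop₁ t
  have h2 := hloop₂ t
  set s := ‖z₂ t‖ with hs
  have hs0 : 0 ≤ s := norm_nonneg _
  have hrsign : r t * Real.sign (r t) = |r t| := by
    rcases lt_trichotomy (r t) 0 with h | h | h
    · rw [Real.sign_of_neg h, abs_of_neg h]; ring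
    · simp [h]
    · rw [Real.sign_of_pos h, abs_of_pos h]; ring
  have hBt := hB t
  have hk₃' : c₁ ≤ Blo * k₃ := by
    rw [div_le_iff₀ hBlo] at hk₃; linarith [hk₃]
  have hk₄' : c₂ ≤ Blo * k₄ := by
    rw [div_le_iff₀ hBlo] at hk₄; linarith [hk₄]
  have hk₃0 : 0 ≤ k₃ := le_trans (div_nonneg hc₁ hBlo.le) hk₃
  have hk₄0 : 0 ≤ k₄ := le_trans (div_nonneg hc₂ hBlo.le) hk₄
  have hχt := hχ t
  have hrχ : r t * χ t ≤ (c₁ + c₂ * s) * |r t| := by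
    calc r t * χ t ≤ |r t * χ t| := le_abs_self _
      _ = |r t| * |χ t| := abs_mul _ _
      _ ≤ (c₁ + c₂ * s) * |r t| := by
          rw [mul_comm]; exact mul_le_mul_of_nonneg_right hχt (abs_nonneg _)
  have hks : 0 ≤ k₃ + k₄ * s := by positivity
  have hBsign : (c₁ + c₂ * s) * |r t| ≤ B t * ((k₃ + k₄ * s) * |r t|) := by
    have h1 : c₁ + c₂ * s ≤ Blo * (k₃ + k₄ * s) := by nlinarith
    have h2 : Blo * (k₃ + k₄ * s) ≤ B t * (k₃ + k₄ * s) :=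
      mul_le_mul_of_nonneg_right hBt.1 hks
    nlinarith [abs_nonneg (r t)]
  have hBk2 : Blo * k₂ * r t ^ 2 ≤ B t * (k₂ * r t ^ 2) := by
    have := mul_le_mul_of_nonneg_right hBt.1 (by positivity : (0:ℝ) ≤ k₂ * r t ^ 2)
    linarith
  have key : e t * ed t + J * r t * rd t
      = -β * e t ^ 2 + r t * χ t - B t * (k₂ * r t ^ 2)
        - B t * ((k₃ + k₄ * s) * |r t|) := by
    have : J * r t * rd t = r t * (J * rd t) := by ring
    rw [h1, this, h2]
    rw [← hrsign]; ring
  rw [key]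
  linarith
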